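/- Let h be a skew-symmetric real m×m matrix (m ≥ 2) and let ν ∈ ℝ^m be a unit vector. If ν_K h_{IJ} + ν_I h_{JK} + ν_J h_{KI} = 0 for all indices I, J, K ∈ {1,…,m}, then the rank of h is at most 2. Consequently, if rank(h) ≥ 3 then for every unit vector ν there exist indices I, J, K with ν_K h_{IJ} + ν_I h_{JK} + ν_J h_{KI} ≠ 0. -/

import Mathlib

open Matrix

/-!
Contracting the cyclic identity `ν_K h_{IJ} + ν_I h_{JK} + ν_J h_{KI} = 0` with `ν_K` and
using `|ν| = 1` and skew-symmetry gives `h = a νᵀ - ν aᵀ` with `a = h ν`, a matrix of rank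
at most 2.
-/

theorem Matrix.rank_vecMulVec_sub_vecMulVec_le {R m n : Type*} [CommRing R]
    [StrongRankCondition R] [Fintype n] (u w : m → R) (v x : n → R) :
    (vecMulVec u v - vecMulVec w x).rank ≤ 2 := by
  have hfac : vecMulVec u v - vecMulVec w x = (of ![u, w])ᵀ * of ![v, -x] := by
    ext i j
    simp [mul_apply, Fin.sum_univ_two, vecMulVec_apply, sub_eq_add_neg]
  calc (vecMulVec u v - vecMulVec w x).rank
      ≤ (of ![u, w])ᵀ.rank := hfac ▸ rank_mul_le_left _ _
    _ ≤ 2 := (rank_le_card_width _).trans_eq (Fintype.card_fin 2)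

theorem Matrix.eq_vecMulVec_sub_vecMulVec_of_cyclic_eq_zero {R n : Type*} [CommRing R]
    [Fintype n] {h : Matrix n n R} (hskew : hᵀ = -h) {ν : n → R} (hν : ν ⬝ᵥ ν = 1)
    (hcyc : ∀ I J K, ν K * h I J + ν I * h J K + ν J * h K I = 0) :
    h = vecMulVec (h *ᵥ ν) ν - vecMulVec ν (h *ᵥ ν) := by
  ext I J
  have hrow : ν ᵥ* h = -(h *ᵥ ν) := by rw [← mulVec_transpose, hskew, neg_mulVec]
  have hcontract : (ν ⬝ᵥ ν) * h I J + ν I * (h *ᵥ ν) J + ν J * (ν ᵥ* h) I = 0 := by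
    rw [← Finset.sum_eq_zero fun K _ => congrArg (ν K * ·) (hcyc I J K) |>.trans (mul_zero _)]
    simp only [dotProduct, mulVec, vecMul, Finset.sum_mul, Finset.mul_sum,
      ← Finset.sum_add_distrib]
    exact Finset.sum_congr rfl fun K _ => by ring
  rw [hν, hrow] at hcontract
  simp only [sub_apply, vecMulVec_apply, Pi.neg_apply] at hcontract ⊢
  linear_combination hcontract

theorem Matrix.rank_le_two_of_cyclic_eq_zero {R n : Type*} [CommRing R] [StrongRankCondition R]
    [Fintype n] {h : Matrix n n R} (hskew : hᵀ = -h) {ν : n → R} (hν : ν ⬝ᵥ ν = 1)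
    (hcyc : ∀ I J K, ν K * h I J + ν I * h J K + ν J * h K I = 0) :
    h.rank ≤ 2 :=
  eq_vecMulVec_sub_vecMulVec_of_cyclic_eq_zero hskew hν hcyc ▸
    rank_vecMulVec_sub_vecMulVec_le _ _ _ _

theorem stmt_10_general {m : ℕ} (h : Matrix (Fin m) (Fin m) ℝ)
    (hskew : h + hᵀ = 0) :
    (∀ ν : Fin m → ℝ, (∑ i, ν i ^ 2 = 1) →
      (∀ I J K : Fin m, ν K * h I J + ν I * h J K + ν J * h K I = 0) → h.rank ≤ 2) ∧
    (3 ≤ h.rank → ∀ ν : Fin m → ℝ, (∑ i, ν i ^ 2 = 1) →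
      ∃ I J K : Fin m, ν K * h I J + ν I * h J K + ν J * h K I ≠ 0) := by
  have hskew' : hᵀ = -h := eq_neg_of_add_eq_zero_right hskew
  have hrank : ∀ ν : Fin m → ℝ, (∑ i, ν i ^ 2 = 1) →
      (∀ I J K : Fin m, ν K * h I J + ν I * h J K + ν J * h K I = 0) → h.rank ≤ 2 :=
    fun ν hν hcyc ↦
      rank_le_two_of_cyclic_eq_zero hskew' (by simpa [dotProduct, sq] using hν) hcyc
  refine ⟨hrank, fun h3 ν hν ↦ ?_⟩
  by_contra! hcyc
  have := hrank ν hν hcyc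
  omega

/-- For a skew-symmetric real `m×m` matrix `h` (`m ≥ 2`): if for some unit vector `ν` the
cyclic sums `ν_K h_{IJ} + ν_I h_{JK} + ν_J h_{KI}` all vanish, then `rank h ≤ 2`;
consequently, if `rank h ≥ 3`, then for every unit vector `ν` some cyclic sum is nonzero. -/
theorem stmt_10 {m : ℕ} (hm : 2 ≤ m) (h : Matrix (Fin m) (Fin m) ℝ)
    (hskew : h + hᵀ = 0) :
    (∀ ν : Fin m → ℝ, (∑ i, ν i ^ 2 = 1) →
      (∀ I J K : Fin m, ν K * h I J + ν I * h J K + ν J * h K I = 0) → h.rank ≤ 2) ∧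
    (3 ≤ h.rank → ∀ ν : Fin m → ℝ, (∑ i, ν i ^ 2 = 1) →
      ∃ I J K : Fin m, ν K * h I J + ν I * h J K + ν J * h K I ≠ 0) :=
  stmt_10_general h hskew
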